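/- arXiv:2203.02321 — 8 statements merged into one kernel-verified Lean document; each statement's English description precedes it below -/
import Mathlib

section
/- Let B be an n×m real matrix and R an m×m real symmetric positive definite matrix. If M₁ and M₂ are n×n real symmetric positive definite matrices with M₂ ⪯ M₁ (i.e., M₁ − M₂ positive semidefinite), then g(B,R,M₂) ⪯ g(B,R,M₁), where g(B,R,M) := M − M B (Bᵀ M B + R)⁻¹ Bᵀ M. That is, the Riccati-type update M ↦ g(B,R,M) is monotone with respect to the Loewner order on positive definite matrices. -/
open Matrix

/-- The Riccati-type update `g(B,R,M) = M − M B (Bᵀ M B + R)⁻¹ Bᵀ M`. -/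
noncomputable def g {n m : ℕ} (B : Matrix (Fin n) (Fin m) ℝ)
    (R : Matrix (Fin m) (Fin m) ℝ) (M : Matrix (Fin n) (Fin n) ℝ) :
    Matrix (Fin n) (Fin n) ℝ :=
  M - M * B * (Bᵀ * M * B + R)⁻¹ * Bᵀ * M

/-- monotonicity of the Riccati-type update in the Loewner order:
if `M₂ ⪯ M₁` (both symmetric positive definite) then `g(B,R,M₂) ⪯ g(B,R,M₁)`. -/
theorem g_monotone {n m : ℕ}
    (B : Matrix (Fin n) (Fin m) ℝ) (R : Matrix (Fin m) (Fin m) ℝ)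
    (hR : R.PosDef)
    (M₁ M₂ : Matrix (Fin n) (Fin n) ℝ)
    (hM₁ : M₁.PosDef) (hM₂ : M₂.PosDef)
    (hle : (M₁ - M₂).PosSemidef) :
    (g B R M₁ - g B R M₂).PosSemidef := by
  classical
  have hRs : Rᵀ = R := by
    rw [← conjTranspose_eq_transpose_of_trivial]; exact hR.isHermitian
  have hM₁s : M₁ᵀ = M₁ := by
    rw [← conjTranspose_eq_transpose_of_trivial]; exact hM₁.isHermitian
  have hM₂s : M₂ᵀ = M₂ := by
    rw [← conjTranspose_eq_transpose_of_trivial]; exact hM₂.isHermitian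
  set S₁ := Bᵀ * M₁ * B + R with hS₁def
  set S₂ := Bᵀ * M₂ * B + R with hS₂def
  have hBMB₁ : (Bᵀ * M₁ * B).PosSemidef := by
    have := hM₁.posSemidef.conjTranspose_mul_mul_same B
    rwa [conjTranspose_eq_transpose_of_trivial] at this
  have hBMB₂ : (Bᵀ * M₂ * B).PosSemidef := by
    have := hM₂.posSemidef.conjTranspose_mul_mul_same B
    rwa [conjTranspose_eq_transpose_of_trivial] at this
  have hS₁ : S₁.PosDef := Matrix.PosDef.posSemidef_add hBMB₁ hR
  have hS₂ : S₂.PosDef := Matrix.PosDef.posSemidef_add hBMB₂ hR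
  have hinv₁ : S₁ * S₁⁻¹ = 1 := Matrix.mul_nonsing_inv _ hS₁.det_pos.ne'.isUnit
  have hinv₁' : S₁⁻¹ * S₁ = 1 := Matrix.nonsing_inv_mul _ hS₁.det_pos.ne'.isUnit
  have hinv₂ : S₂ * S₂⁻¹ = 1 := Matrix.mul_nonsing_inv _ hS₂.det_pos.ne'.isUnit
  have hinv₂' : S₂⁻¹ * S₂ = 1 := Matrix.nonsing_inv_mul _ hS₂.det_pos.ne'.isUnit
  have hS₁s : S₁ᵀ = S₁ := by
    rw [hS₁def]
    simp [transpose_add, transpose_mul, hM₁s, hRs, Matrix.mul_assoc]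
  have hS₂s : S₂ᵀ = S₂ := by
    rw [hS₂def]
    simp [transpose_add, transpose_mul, hM₂s, hRs, Matrix.mul_assoc]
  have hS₁is : (S₁⁻¹)ᵀ = S₁⁻¹ := by rw [transpose_nonsing_inv, hS₁s]
  have hS₂is : (S₂⁻¹)ᵀ = S₂⁻¹ := by rw [transpose_nonsing_inv, hS₂s]
  set K := M₁ * B * S₁⁻¹ with hK
  set K₂ := M₂ * B * S₂⁻¹ with hK₂
  have hKt : Kᵀ = S₁⁻¹ * (Bᵀ * M₁) := by
    rw [hK, transpose_mul, transpose_mul, hS₁is, hM₁s]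
  have hK₂t : K₂ᵀ = S₂⁻¹ * (Bᵀ * M₂) := by
    rw [hK₂, transpose_mul, transpose_mul, hS₂is, hM₂s]
  have hKS₁ : K * S₁ = M₁ * B := by
    rw [hK, Matrix.mul_assoc, hinv₁', Matrix.mul_one]
  have hK₂S₂ : K₂ * S₂ = M₂ * B := by
    rw [hK₂, Matrix.mul_assoc, hinv₂', Matrix.mul_one]
  have hS₂K₂t : S₂ * K₂ᵀ = Bᵀ * M₂ := by
    rw [hK₂t, ← Matrix.mul_assoc, hinv₂, Matrix.one_mul]
  set D := (1 : Matrix (Fin n) (Fin n) ℝ) - K * Bᵀ with hD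
  have hDt : Dᵀ = 1 - B * Kᵀ := by
    rw [hD, transpose_sub, transpose_one, transpose_mul, transpose_transpose]
  -- Joseph form for M₁
  have expand₁ : D * M₁ * Dᵀ
      = M₁ - K * (Bᵀ * M₁) - M₁ * B * Kᵀ + K * (Bᵀ * M₁ * B) * Kᵀ := by
    rw [hD, hDt]
    simp only [Matrix.sub_mul, Matrix.mul_sub, Matrix.one_mul, Matrix.mul_one]
    simp only [Matrix.mul_assoc]
    abel
  have expand₂ : D * M₂ * Dᵀ
      = M₂ - K * (Bᵀ * M₂) - M₂ * B * Kᵀ + K * (Bᵀ * M₂ * B) * Kᵀ := by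
    rw [hD, hDt]
    simp only [Matrix.sub_mul, Matrix.mul_sub, Matrix.one_mul, Matrix.mul_one]
    simp only [Matrix.mul_assoc]
    abel
  have hcan₁ : K * (Bᵀ * M₁ * B) * Kᵀ = M₁ * B * Kᵀ - K * R * Kᵀ := by
    rw [eq_sub_iff_add_eq, ← Matrix.add_mul, ← Matrix.mul_add, ← hS₁def, hKS₁]
  have hcan₂ : K * (Bᵀ * M₂ * B) * Kᵀ = K * S₂ * Kᵀ - K * R * Kᵀ := by
    rw [eq_sub_iff_add_eq, ← Matrix.add_mul, ← Matrix.mul_add, ← hS₂def]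
  have hg1 : g B R M₁ = M₁ - K * (Bᵀ * M₁) := by
    rw [g, ← hS₁def, hK]
    simp only [Matrix.mul_assoc]
  have hg2 : g B R M₂ = M₂ - K₂ * (Bᵀ * M₂) := by
    rw [g, ← hS₂def, hK₂]
    simp only [Matrix.mul_assoc]
  have hJ1 : D * M₁ * Dᵀ + K * R * Kᵀ = g B R M₁ := by
    rw [expand₁, hcan₁, hg1]; abel
  have expandQ : (K - K₂) * S₂ * (K - K₂)ᵀ
      = K * S₂ * Kᵀ - K * (S₂ * K₂ᵀ) - K₂ * S₂ * Kᵀ + K₂ * (S₂ * K₂ᵀ) := by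
    rw [transpose_sub]
    simp only [Matrix.sub_mul, Matrix.mul_sub]
    simp only [Matrix.mul_assoc]
    abel
  have hJ2 : D * M₂ * Dᵀ + K * R * Kᵀ
      = g B R M₂ + (K - K₂) * S₂ * (K - K₂)ᵀ := by
    rw [expand₂, hcan₂, hg2, expandQ, hS₂K₂t, hK₂S₂]
    abel
  have key : g B R M₁ - g B R M₂
      = D * (M₁ - M₂) * Dᵀ + (K - K₂) * S₂ * (K - K₂)ᵀ := by
    have hsplit : D * (M₁ - M₂) * Dᵀ = D * M₁ * Dᵀ - D * M₂ * Dᵀ := by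
      rw [Matrix.mul_sub, Matrix.sub_mul]
    have hg2' : g B R M₂
        = D * M₂ * Dᵀ + K * R * Kᵀ - (K - K₂) * S₂ * (K - K₂)ᵀ := by
      rw [hJ2]; abel
    rw [← hJ1, hg2', hsplit]; abel
  rw [key]
  have h1 : (D * (M₁ - M₂) * Dᵀ).PosSemidef := by
    have := hle.mul_mul_conjTranspose_same D
    rwa [conjTranspose_eq_transpose_of_trivial] at this
  have h2 : ((K - K₂) * S₂ * (K - K₂)ᵀ).PosSemidef := by
    have := hS₂.posSemidef.mul_mul_conjTranspose_same (K - K₂)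
    rwa [conjTranspose_eq_transpose_of_trivial] at this
  exact h1.add h2
end

section
/- Let B be an n×m real matrix and R an m×m real symmetric positive definite matrix. The map M ↦ g(B,R,M) := M − M B (Bᵀ M B + R)⁻¹ Bᵀ M is matrix-concave on the cone of symmetric positive semidefinite matrices: for all n×n symmetric positive semidefinite matrices M₁, M₂ and all λ ∈ [0,1], g(B,R, λM₁ + (1−λ)M₂) ⪰ λ g(B,R,M₁) + (1−λ) g(B,R,M₂) in the Loewner order. -/
open Matrix

/-!
`g(B,R,M)` is the Kalman covariance update `M - K Bᵀ M` at the optimal gain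
`Kₒₚₜ = M B (Bᵀ M B + R)⁻¹`. For an arbitrary gain `K` the updated covariance is the Joseph form
`(1 - K Bᵀ) M (1 - K Bᵀ)ᵀ + K R Kᵀ`, which exceeds `g(B,R,M)` by the completed square
`(K - Kₒₚₜ) (Bᵀ M B + R) (K - Kₒₚₜ)ᵀ ⪰ 0`. So `g(B,R,·)` is the pointwise minimum over `K` of maps
affine in `M`, hence concave: compare all three Joseph forms at the optimal gain of the convex
combination.
-/

open scoped MatrixOrder

namespace Matrix

variable {α n m : Type*} [CommRing α] [Fintype n] [Fintype m]

def josephForm [DecidableEq n] (B : Matrix n m α) (R : Matrix m m α) (M : Matrix n n α)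
    (K : Matrix n m α) : Matrix n n α :=
  (1 - K * Bᵀ) * M * (1 - K * Bᵀ)ᵀ + K * R * Kᵀ

noncomputable def kalmanGain [DecidableEq m] (B : Matrix n m α) (R : Matrix m m α)
    (M : Matrix n n α) : Matrix n m α :=
  M * B * (Bᵀ * M * B + R)⁻¹

lemma josephForm_smul_add_smul [DecidableEq n] (B : Matrix n m α) (R : Matrix m m α)
    (M₁ M₂ : Matrix n n α) (K : Matrix n m α) {a b : α} (hab : a + b = 1) :
    josephForm B R (a • M₁ + b • M₂) K = a • josephForm B R M₁ K + b • josephForm B R M₂ K := by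
  obtain rfl : b = 1 - a := eq_sub_of_add_eq' hab
  simp only [josephForm, Matrix.mul_add, Matrix.add_mul, Matrix.mul_smul, Matrix.smul_mul]
  module

lemma josephForm_sub_eq [DecidableEq n] [DecidableEq m] {B : Matrix n m α}
    {R : Matrix m m α} {M : Matrix n n α} (hM : M.IsSymm) (hR : R.IsSymm)
    (hS : IsUnit (Bᵀ * M * B + R).det) (K : Matrix n m α) :
    josephForm B R M K - (M - kalmanGain B R M * Bᵀ * M)
      = (K - kalmanGain B R M) * (Bᵀ * M * B + R) * (K - kalmanGain B R M)ᵀ := by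
  unfold josephForm kalmanGain
  set S := Bᵀ * M * B + R
  have hS_symm : Sᵀ = S := by
    simp only [S, transpose_add, transpose_mul, transpose_transpose, hM.eq, hR.eq,
      Matrix.mul_assoc]
  have hS_inv_symm : S⁻¹ᵀ = S⁻¹ := by rw [transpose_nonsing_inv, hS_symm]
  have inv_mul_cancel_left (X : Matrix m n α) : S⁻¹ * (S * X) = X := by
    rw [← Matrix.mul_assoc, nonsing_inv_mul _ hS, Matrix.one_mul]
  have mul_inv_cancel_left (X : Matrix m n α) : S * (S⁻¹ * X) = X := by
    rw [← Matrix.mul_assoc, mul_nonsing_inv _ hS, Matrix.one_mul]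
  simp only [transpose_sub, transpose_mul, transpose_one, transpose_transpose, hS_inv_symm, hM.eq,
    Matrix.mul_sub, Matrix.sub_mul, Matrix.one_mul, Matrix.mul_one, Matrix.mul_assoc,
    inv_mul_cancel_left, mul_inv_cancel_left]
  simp only [S, Matrix.add_mul, Matrix.mul_add, Matrix.mul_assoc]
  abel

lemma josephForm_kalmanGain [DecidableEq n] [DecidableEq m] {B : Matrix n m α}
    {R : Matrix m m α} {M : Matrix n n α} (hM : M.IsSymm) (hR : R.IsSymm)
    (hS : IsUnit (Bᵀ * M * B + R).det) :
    josephForm B R M (kalmanGain B R M) = M - kalmanGain B R M * Bᵀ * M := by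
  simpa [sub_eq_zero] using josephForm_sub_eq hM hR hS (kalmanGain B R M)

lemma PosSemidef.transpose_mul_mul_add_posDef {B : Matrix n m ℝ} {M : Matrix n n ℝ}
    {R : Matrix m m ℝ} (hM : M.PosSemidef) (hR : R.PosDef) : (Bᵀ * M * B + R).PosDef := by
  refine PosDef.posSemidef_add ?_ hR
  simpa only [conjTranspose_eq_transpose_of_trivial] using hM.conjTranspose_mul_mul_same B

lemma PosSemidef.sub_kalmanGain_le_josephForm [DecidableEq n] [DecidableEq m]
    {B : Matrix n m ℝ} {M : Matrix n n ℝ} {R : Matrix m m ℝ} (hM : M.PosSemidef) (hR : R.PosDef)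
    (K : Matrix n m ℝ) : M - kalmanGain B R M * Bᵀ * M ≤ josephForm B R M K := by
  have hS := hM.transpose_mul_mul_add_posDef (B := B) hR
  rw [le_iff, josephForm_sub_eq (isHermitian_iff_isSymm.mp hM.isHermitian)
    (isHermitian_iff_isSymm.mp hR.isHermitian) hS.det_pos.ne'.isUnit]
  simpa only [conjTranspose_eq_transpose_of_trivial] using
    hS.posSemidef.mul_mul_conjTranspose_same (K - kalmanGain B R M)

end Matrix

/-- matrix concavity of `M ↦ g(B,R,M)` on the positive semidefinite cone:
for `M₁, M₂ ⪰ 0` and `λ ∈ [0,1]`,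
`g(B,R, λM₁ + (1−λ)M₂) ⪰ λ g(B,R,M₁) + (1−λ) g(B,R,M₂)`. -/
theorem g_concave {n m : ℕ}
    (B : Matrix (Fin n) (Fin m) ℝ) (R : Matrix (Fin m) (Fin m) ℝ)
    (hR : R.PosDef)
    (M₁ M₂ : Matrix (Fin n) (Fin n) ℝ)
    (hM₁ : M₁.PosSemidef) (hM₂ : M₂.PosSemidef)
    (lam : ℝ) (hlam₀ : 0 ≤ lam) (hlam₁ : lam ≤ 1) :
    (g B R (lam • M₁ + (1 - lam) • M₂)
      - (lam • g B R M₁ + (1 - lam) • g B R M₂)).PosSemidef := by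
  set M := lam • M₁ + (1 - lam) • M₂
  have hM : M.PosSemidef := (hM₁.smul hlam₀).add (hM₂.smul (sub_nonneg.2 hlam₁))
  have hS := hM.transpose_mul_mul_add_posDef (B := B) hR
  set K := kalmanGain B R M
  have hg : g B R M = lam • josephForm B R M₁ K + (1 - lam) • josephForm B R M₂ K :=
    calc g B R M = josephForm B R M K :=
          (josephForm_kalmanGain (isHermitian_iff_isSymm.mp hM.isHermitian)
            (isHermitian_iff_isSymm.mp hR.isHermitian) hS.det_pos.ne'.isUnit).symm
      _ = _ := josephForm_smul_add_smul B R M₁ M₂ K (add_sub_cancel lam 1)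
  rw [← le_iff, hg]
  exact add_le_add (smul_le_smul_of_nonneg_left (hM₁.sub_kalmanGain_le_josephForm hR K) hlam₀)
    (smul_le_smul_of_nonneg_left (hM₂.sub_kalmanGain_le_josephForm hR K) (sub_nonneg.2 hlam₁))
end

section
/- Let B be an n×m real matrix, R an m×m real symmetric positive definite matrix, and let M and X be n×n real symmetric positive semidefinite matrices. Then the matrix-valued function ε ↦ g(B,R, M + εX) is differentiable at ε = 0 and its derivative there equals H(B,R,M) · X · H(B,R,M)ᵀ, where H(B,R,M) := I − M B (Bᵀ M B + R)⁻¹ Bᵀ. -/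
/-!
Write `W(M) = B (Bᵀ M B + R)⁻¹ Bᵀ`, so that `g(M) = M − M W M`. Differentiating the inverse
gives `dW = −W X W`, and the product rule then gives
`X − X W M − M W X + M W X W M = (I − M W) X (I − W M)`.
Finally `I − M W = H` and, since `M` and `R` are symmetric, `I − W M = Hᵀ`.
-/

open Matrix

-- Equip matrices with the Frobenius norm (differentiability does not depend on the
-- choice of norm in finite dimension).
attribute [local instance] Matrix.frobeniusNormedAddCommGroup Matrix.frobeniusNormedSpace

/-- `H(B,R,M) = I − M B (Bᵀ M B + R)⁻¹ Bᵀ`. -/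
noncomputable def H {n m : ℕ} (B : Matrix (Fin n) (Fin m) ℝ)
    (R : Matrix (Fin m) (Fin m) ℝ) (M : Matrix (Fin n) (Fin n) ℝ) :
    Matrix (Fin n) (Fin n) ℝ :=
  1 - M * B * (Bᵀ * M * B + R)⁻¹ * Bᵀ

attribute [local instance] Matrix.frobeniusNormedRing Matrix.frobeniusNormedAlgebra

section MatrixCalculus

variable {𝕜 : Type*} [RCLike 𝕜] {ι κ ν : Type*} [Fintype ι] [Fintype κ] [Fintype ν]
  {x : 𝕜}

theorem HasDerivAt.const_matrix_mul (A : Matrix ι κ 𝕜) {f : 𝕜 → Matrix κ ν 𝕜}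
    {f' : Matrix κ ν 𝕜} (hf : HasDerivAt f f' x) :
    HasDerivAt (fun t => A * f t) (A * f') x := by
  have h := (mulLeftLinearMap ν 𝕜 A).toContinuousLinearMap.hasFDerivAt.comp_hasDerivAt x hf
  simp only [Function.comp_def, LinearMap.coe_toContinuousLinearMap', mulLeftLinearMap_apply] at h
  exact h

theorem HasDerivAt.matrix_mul_const (A : Matrix κ ν 𝕜) {f : 𝕜 → Matrix ι κ 𝕜}
    {f' : Matrix ι κ 𝕜} (hf : HasDerivAt f f' x) :
    HasDerivAt (fun t => f t * A) (f' * A) x := by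
  have h := (mulRightLinearMap ι 𝕜 A).toContinuousLinearMap.hasFDerivAt.comp_hasDerivAt x hf
  simp only [Function.comp_def, LinearMap.coe_toContinuousLinearMap', mulRightLinearMap_apply] at h
  exact h

theorem HasDerivAt.matrix_inv [DecidableEq ι] {S : 𝕜 → Matrix ι ι 𝕜} {S' : Matrix ι ι 𝕜}
    (hS : HasDerivAt S S' x) (hSx : IsUnit (S x)) :
    HasDerivAt (fun t => (S t)⁻¹) (-((S x)⁻¹ * S' * (S x)⁻¹)) x := by
  have h := hasFDerivAt_ringInverse (𝕜 := 𝕜) hSx.unit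
  rw [coe_units_inv, hSx.unit_spec] at h
  have h' := h.comp_hasDerivAt x hS
  simp only [Function.comp_def, ← nonsing_inv_eq_ringInverse] at h'
  exact h'

end MatrixCalculus

theorem hasDerivAt_g_of_isUnit {n m : ℕ} (B : Matrix (Fin n) (Fin m) ℝ)
    (R : Matrix (Fin m) (Fin m) ℝ) (M X : Matrix (Fin n) (Fin n) ℝ)
    (hS : IsUnit (Bᵀ * M * B + R)) :
    HasDerivAt (fun ε : ℝ => g B R (M + ε • X))
      (H B R M * X * (1 - B * (Bᵀ * M * B + R)⁻¹ * Bᵀ * M)) 0 := by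
  set W := B * (Bᵀ * M * B + R)⁻¹ * Bᵀ with hW_def
  have hpath : HasDerivAt (fun ε : ℝ => M + ε • X) X 0 :=
    (((hasDerivAt_id' 0).smul_const X).const_add M).congr_deriv (one_smul ℝ X)
  have hS' : HasDerivAt (fun ε : ℝ => Bᵀ * (M + ε • X) * B + R) (Bᵀ * X * B) 0 :=
    ((hpath.const_matrix_mul Bᵀ).matrix_mul_const B).add_const R
  have hW : HasDerivAt (fun ε : ℝ => B * (Bᵀ * (M + ε • X) * B + R)⁻¹ * Bᵀ) (-(W * X * W)) 0 := by
    convert ((hS'.matrix_inv (by simpa using hS)).const_matrix_mul B).matrix_mul_const Bᵀ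
      using 1
    simp [W, Matrix.mul_assoc]
  have hg : (fun ε : ℝ => g B R (M + ε • X)) = fun ε : ℝ =>
      (M + ε • X) - (M + ε • X) * (B * (Bᵀ * (M + ε • X) * B + R)⁻¹ * Bᵀ) * (M + ε • X) := by
    funext ε
    simp only [g, Matrix.mul_assoc]
  rw [hg]
  refine (hpath.sub ((hpath.mul hW).mul hpath)).congr_deriv ?_
  have hH : H B R M = 1 - M * W := by simp only [H, W, Matrix.mul_assoc]
  simp only [Pi.mul_apply, zero_smul, add_zero, ← hW_def, hH]
  generalize W = W
  noncomm_ring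

theorem transpose_H {n m : ℕ} (B : Matrix (Fin n) (Fin m) ℝ) {R : Matrix (Fin m) (Fin m) ℝ}
    {M : Matrix (Fin n) (Fin n) ℝ} (hR : R.IsSymm) (hM : M.IsSymm) :
    (H B R M)ᵀ = 1 - B * (Bᵀ * M * B + R)⁻¹ * Bᵀ * M := by
  simp only [H, transpose_sub, transpose_one, transpose_mul, transpose_nonsing_inv,
    transpose_add, transpose_transpose, hR.eq, hM.eq, Matrix.mul_assoc]

theorem g_hasDerivAt_general {n m : ℕ}
    (B : Matrix (Fin n) (Fin m) ℝ) (R : Matrix (Fin m) (Fin m) ℝ)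
    (hR : R.PosDef)
    (M X : Matrix (Fin n) (Fin n) ℝ)
    (hM : M.PosSemidef) :
    HasDerivAt (fun ε : ℝ => g B R (M + ε • X))
      (H B R M * X * (H B R M)ᵀ) 0 := by
  have hS : (Bᵀ * M * B + R).PosDef := by
    simpa using PosDef.posSemidef_add (hM.conjTranspose_mul_mul_same B) hR
  rw [transpose_H B (isHermitian_iff_isSymm.mp hR.isHermitian)
    (isHermitian_iff_isSymm.mp hM.isHermitian)]
  exact hasDerivAt_g_of_isUnit B R M X hS.isUnit

/-- the map `ε ↦ g(B,R,M + εX)` is differentiable at `ε = 0` with derivative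
`H(B,R,M) X H(B,R,M)ᵀ`. -/
theorem g_hasDerivAt {n m : ℕ}
    (B : Matrix (Fin n) (Fin m) ℝ) (R : Matrix (Fin m) (Fin m) ℝ)
    (hR : R.PosDef)
    (M X : Matrix (Fin n) (Fin n) ℝ)
    (hM : M.PosSemidef) (hX : X.PosSemidef) :
    HasDerivAt (fun ε : ℝ => g B R (M + ε • X))
      (H B R M * X * (H B R M)ᵀ) 0 :=
  g_hasDerivAt_general B R hR M X hM
end

section
/- Let B be an n×m real matrix, R an m×m real symmetric positive definite matrix, and let M₁ and M₂ be n×n real symmetric positive semidefinite matrices. Then g(B,R,M₁) ⪯ g(B,R,M₂) + H(B,R,M₂) (M₁ − M₂) H(B,R,M₂)ᵀ in the Loewner order; that is, the concave map M ↦ g(B,R,M) is dominated by its first-order expansion at M₂ with derivative H(B,R,M₂)(·)H(B,R,M₂)ᵀ. -/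
open Matrix

lemma keyB {n m : ℕ} (B : Matrix (Fin n) (Fin m) ℝ) (R : Matrix (Fin m) (Fin m) ℝ)
    (M : Matrix (Fin n) (Fin n) ℝ) (K : Matrix (Fin n) (Fin m) ℝ)
    (hM : Mᵀ = M) (hRt : Rᵀ = R) (hdet : IsUnit (Bᵀ * M * B + R).det) :
    (1 - K * Bᵀ) * M * (1 - K * Bᵀ)ᵀ + K * R * Kᵀ
      - (M - M * B * (Bᵀ * M * B + R)⁻¹ * Bᵀ * M)
    = (K - M * B * (Bᵀ * M * B + R)⁻¹) * (Bᵀ * M * B + R)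
        * (K - M * B * (Bᵀ * M * B + R)⁻¹)ᵀ := by
  set S := Bᵀ * M * B + R with hS
  have hSt : Sᵀ = S := by
    rw [hS]; simp [transpose_add, transpose_mul, hM, hRt, Matrix.mul_assoc]
  have hiT : S⁻¹ᵀ = S⁻¹ := by rw [transpose_nonsing_inv, hSt]
  have hc1 : ∀ (X : Matrix (Fin m) (Fin n) ℝ), S * (S⁻¹ * X) = X := fun X => by
    rw [← Matrix.mul_assoc, Matrix.mul_nonsing_inv _ hdet, Matrix.one_mul]
  have hc2 : ∀ (X : Matrix (Fin m) (Fin n) ℝ), S⁻¹ * (S * X) = X := fun X => by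
    rw [← Matrix.mul_assoc, Matrix.nonsing_inv_mul _ hdet, Matrix.one_mul]
  simp only [transpose_sub, transpose_mul, transpose_one, transpose_transpose, hM, hiT]
  simp only [Matrix.sub_mul, Matrix.mul_sub, Matrix.add_mul, Matrix.mul_add,
    Matrix.one_mul, Matrix.mul_one, Matrix.mul_assoc, hc1, hc2]
  rw [hS]
  simp only [Matrix.sub_mul, Matrix.mul_sub, Matrix.add_mul, Matrix.mul_add,
    Matrix.one_mul, Matrix.mul_one, Matrix.mul_assoc]
  abel

/-- the concave map `M ↦ g(B,R,M)` is dominated by its first-order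
expansion at `M₂`:  `g(B,R,M₁) ⪯ g(B,R,M₂) + H(B,R,M₂) (M₁ − M₂) H(B,R,M₂)ᵀ`. -/
theorem g_le_firstOrder {n m : ℕ}
    (B : Matrix (Fin n) (Fin m) ℝ) (R : Matrix (Fin m) (Fin m) ℝ)
    (hR : R.PosDef)
    (M₁ M₂ : Matrix (Fin n) (Fin n) ℝ)
    (hM₁ : M₁.PosSemidef) (hM₂ : M₂.PosSemidef) :
    (g B R M₂ + H B R M₂ * (M₁ - M₂) * (H B R M₂)ᵀ - g B R M₁).PosSemidef := by

  have hM₁t : M₁ᵀ = M₁ := by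
    rw [← conjTranspose_eq_transpose_of_trivial]; exact hM₁.isHermitian
  have hM₂t : M₂ᵀ = M₂ := by
    rw [← conjTranspose_eq_transpose_of_trivial]; exact hM₂.isHermitian
  have hRt : Rᵀ = R := by
    rw [← conjTranspose_eq_transpose_of_trivial]; exact hR.isHermitian
  have hS₁ : (Bᵀ * M₁ * B + R).PosDef := by
    have h := Matrix.PosDef.posSemidef_add (hM₁.conjTranspose_mul_mul_same B) hR
    rwa [conjTranspose_eq_transpose_of_trivial] at h
  have hS₂ : (Bᵀ * M₂ * B + R).PosDef := by
    have h := Matrix.PosDef.posSemidef_add (hM₂.conjTranspose_mul_mul_same B) hR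
    rwa [conjTranspose_eq_transpose_of_trivial] at h
  have hdet₁ : IsUnit (Bᵀ * M₁ * B + R).det := isUnit_iff_isUnit_det _ |>.1 hS₁.isUnit
  have hdet₂ : IsUnit (Bᵀ * M₂ * B + R).det := isUnit_iff_isUnit_det _ |>.1 hS₂.isUnit
  set K₂ := M₂ * B * (Bᵀ * M₂ * B + R)⁻¹ with hK₂
  set K₁ := M₁ * B * (Bᵀ * M₁ * B + R)⁻¹ with hK₁
  have e₂ := keyB B R M₂ K₂ hM₂t hRt hdet₂
  rw [← hK₂, sub_self, Matrix.zero_mul, Matrix.zero_mul] at e₂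
  have eg₂ : g B R M₂ = (1 - K₂ * Bᵀ) * M₂ * (1 - K₂ * Bᵀ)ᵀ + K₂ * R * K₂ᵀ :=
    (sub_eq_zero.mp e₂).symm
  have e₁ := keyB B R M₁ K₂ hM₁t hRt hdet₁
  rw [← hK₁] at e₁
  have key : g B R M₂ + H B R M₂ * (M₁ - M₂) * (H B R M₂)ᵀ - g B R M₁
      = (K₂ - K₁) * (Bᵀ * M₁ * B + R) * (K₂ - K₁)ᵀ := by
    have hH : H B R M₂ = 1 - K₂ * Bᵀ := rfl
    rw [hH, eg₂, ← e₁]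
    show _ = (1 - K₂ * Bᵀ) * M₁ * (1 - K₂ * Bᵀ)ᵀ + K₂ * R * K₂ᵀ - g B R M₁
    simp only [Matrix.mul_sub, Matrix.sub_mul]
    abel
  rw [key, ← conjTranspose_eq_transpose_of_trivial]
  exact hS₁.posSemidef.mul_mul_conjTranspose_same _
end

section
/- Let Q be an n×n real symmetric positive definite matrix, A an n×n real matrix, P' an n×n real symmetric positive definite matrix, K := (P')⁻¹, and P an n×n real symmetric matrix. Then P ⪯ (Aᵀ K A + Q)⁻¹ in the Loewner order if and only if the 2n×2n block matrix with blocks [Q⁻¹ − P, Q⁻¹Aᵀ; A Q⁻¹, P' + A Q⁻¹ Aᵀ] is positive semidefinite. -/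
/-!
By the Woodbury identity, `(Aᴴ P'⁻¹ A + Q)⁻¹ = Q⁻¹ - B D⁻¹ Bᴴ` with `B = Q⁻¹ Aᴴ` and
`D = P' + A Q⁻¹ Aᴴ ≻ 0`. Hence `(Aᴴ P'⁻¹ A + Q)⁻¹ - P` is the Schur complement of `D` in the
block matrix `[Q⁻¹ - P, B; Bᴴ, D]`, and a block matrix whose lower-right block is positive definite
is positive semidefinite iff that Schur complement is.
-/

open Matrix

namespace Matrix

variable {m n K : Type*} [Fintype m] [Fintype n] [DecidableEq n]
  [Field K] [PartialOrder K] [StarRing K] [StarOrderedRing K]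

theorem PosDef.add_mul_inv_mul_conjTranspose {Q : Matrix n n K} {P : Matrix m m K}
    (hQ : Q.PosDef) (hP : P.PosDef) (A : Matrix m n K) :
    (P + A * Q⁻¹ * Aᴴ).PosDef :=
  hP.add_posSemidef (hQ.inv.posSemidef.mul_mul_conjTranspose_same A)

theorem PosDef.inv_conjTranspose_mul_inv_mul_add [DecidableEq m] {Q : Matrix n n K}
    {P : Matrix m m K} (hQ : Q.PosDef) (hP : P.PosDef) (A : Matrix m n K) :
    (Aᴴ * P⁻¹ * A + Q)⁻¹ = Q⁻¹ - Q⁻¹ * Aᴴ * (P + A * Q⁻¹ * Aᴴ)⁻¹ * A * Q⁻¹ := by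
  have := hP.isUnit.invertible
  simpa only [add_comm _ Q, inv_inv_of_invertible] using add_mul_mul_inv_eq_sub Q Aᴴ P⁻¹ A
    hQ.isUnit hP.inv.isUnit (by simpa using (hQ.add_mul_inv_mul_conjTranspose hP A).isUnit)

theorem PosDef.posSemidef_inv_conjTranspose_mul_inv_mul_add_sub_iff [DecidableEq m]
    {Q : Matrix n n K} {P : Matrix m m K} (hQ : Q.PosDef) (hP : P.PosDef) (A : Matrix m n K)
    (R : Matrix n n K) :
    ((Aᴴ * P⁻¹ * A + Q)⁻¹ - R).PosSemidef ↔
      (fromBlocks (Q⁻¹ - R) (Q⁻¹ * Aᴴ) (A * Q⁻¹) (P + A * Q⁻¹ * Aᴴ)).PosSemidef := by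
  have hD := hQ.add_mul_inv_mul_conjTranspose hP A
  have := hD.isUnit.invertible
  have hB : A * Q⁻¹ = (Q⁻¹ * Aᴴ)ᴴ := by
    rw [conjTranspose_mul, conjTranspose_conjTranspose, hQ.inv.isHermitian.eq]
  have hBlocks : fromBlocks (Q⁻¹ - R) (Q⁻¹ * Aᴴ) (A * Q⁻¹) (P + A * Q⁻¹ * Aᴴ) =
      fromBlocks (Q⁻¹ - R) (Q⁻¹ * Aᴴ) (Q⁻¹ * Aᴴ)ᴴ (P + A * Q⁻¹ * Aᴴ) := by
    rw [hB]
  rw [hBlocks, PosDef.fromBlocks₂₂ _ _ hD, hQ.inv_conjTranspose_mul_inv_mul_add hP, ← hB,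
    sub_right_comm, Matrix.mul_assoc _ A]

end Matrix

theorem loewner_le_iff_blockMatrix_posSemidef_general {n : ℕ}
    (Q A P' P : Matrix (Fin n) (Fin n) ℝ)
    (hQ : Q.PosDef) (hP' : P'.PosDef)
    (K : Matrix (Fin n) (Fin n) ℝ) (hK : K = P'⁻¹) :
    ((Aᵀ * K * A + Q)⁻¹ - P).PosSemidef ↔
      (Matrix.fromBlocks (Q⁻¹ - P) (Q⁻¹ * Aᵀ) (A * Q⁻¹)
        (P' + A * Q⁻¹ * Aᵀ)).PosSemidef := by
  rw [hK, ← conjTranspose_eq_transpose_of_trivial]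
  exact hQ.posSemidef_inv_conjTranspose_mul_inv_mul_add_sub_iff hP' A P

/-- Schur-complement/Woodbury characterization.  For `Q ≻ 0`, `P' ≻ 0`,
`K = (P')⁻¹` and `P` symmetric, one has `P ⪯ (Aᵀ K A + Q)⁻¹` iff the block matrix
`[Q⁻¹ − P, Q⁻¹Aᵀ; A Q⁻¹, P' + A Q⁻¹ Aᵀ]` is positive semidefinite. -/
theorem loewner_le_iff_blockMatrix_posSemidef {n : ℕ}
    (Q A P' P : Matrix (Fin n) (Fin n) ℝ)
    (hQ : Q.PosDef) (hP' : P'.PosDef) (hP : P.IsSymm)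
    (K : Matrix (Fin n) (Fin n) ℝ) (hK : K = P'⁻¹) :
    ((Aᵀ * K * A + Q)⁻¹ - P).PosSemidef ↔
      (Matrix.fromBlocks (Q⁻¹ - P) (Q⁻¹ * Aᵀ) (A * Q⁻¹)
        (P' + A * Q⁻¹ * Aᵀ)).PosSemidef :=
  loewner_le_iff_blockMatrix_posSemidef_general Q A P' P hQ hP' K hK
end

section
/- (Theorem 1: equivalence of the original and relaxed scheduling problems.) Let T ≥ 1, and for t = 0,…,T−1 let A_t ∈ ℝ^{n×n}, Q_t ∈ ℝ^{n×n} symmetric positive definite, let Q_T ∈ ℝ^{n×n} be symmetric positive definite, let W̄_{t−1} ∈ ℝ^{n×n} be symmetric positive semidefinite, and for each actuator i ∈ {1,…,N} let V_t(i) ∈ ℝ^{n×n} be symmetric positive semidefinite. Consider the objective J({K_{t|t+1}}) := ∑_{t=0}^{T−1} tr(K_{t|t+1} W̄_{t−1}). Problem A (original): minimize J over schedules σ : {0,…,T−1} → {1,…,N} and trajectories defined by P_T = Q_T⁻¹, P_{t|t+1} = P_{t+1} + V_t(σ(t)), K_{t|t+1} = P_{t|t+1}⁻¹, P_t = (A_tᵀ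 K_{t|t+1} A_t + Q_t)⁻¹. Problem B (relaxed): minimize J over tuples {K_{t|t+1}, P_{t|t+1}, P_t, V_t}_{t=0}^{T−1} with V_t ∈ {V_t(1),…,V_t(N)}, P_T = Q_T⁻¹, P_{t|t+1} = P_{t+1} + V_t, the block matrix [K_{t|t+1}, I; I, P_{t|t+1}] positive semidefinite, and the block matrix [Q_t⁻¹ − P_t, Q_t⁻¹A_tᵀ; A_t Q_t⁻¹, P_{t|t+1} + A_t Q_t⁻¹ A_tᵀ] positive semidefinite, for all t. Then the minimum value of Problem A equals the minimum value of Problem B; in particular every optimal solution of the relaxed Problem B attains the optimal value of the original Problem A and vice versa. -/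
/-!
Along the exact Riccati trajectory of a schedule both LMIs hold with equality: by Schur
complements the first says `K_{t|t+1} ≥ P_{t|t+1}⁻¹` and, after the Woodbury identity, the
second says `P_t ≤ (A_tᵀ P_{t|t+1}⁻¹ A_t + Q_t)⁻¹`. So every cost of Problem A is a cost of
Problem B. Conversely, the Riccati update is monotone in the Loewner order, so by backward
induction a relaxed trajectory stays below the exact trajectory of the same schedule. Matrix
inversion being antitone, its gains `K_{t|t+1}` dominate the exact ones, and `tr (K W)` is
monotone in `K` for `W ⪰ 0`: every cost of Problem B dominates one of Problem A.
-/

open Matrix Finset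
open scoped MatrixOrder

namespace Matrix
variable {m : Type*} [Fintype m]

theorem PosSemidef.trace_mul_nonneg {X W : Matrix m m ℝ} (hX : X.PosSemidef)
    (hW : W.PosSemidef) : 0 ≤ (X * W).trace := by
  classical
  obtain ⟨B, rfl⟩ : ∃ B : Matrix m m ℝ, X = star B * B :=
    CStarAlgebra.nonneg_iff_eq_star_mul_self.mp hX.nonneg
  rw [trace_mul_cycle, trace_mul_cycle]
  exact (hW.mul_mul_conjTranspose_same B).trace_nonneg

theorem trace_mul_le_trace_mul {X Y W : Matrix m m ℝ} (h : X ≤ Y) (hW : W.PosSemidef) :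
    (X * W).trace ≤ (Y * W).trace := by
  have := PosSemidef.trace_mul_nonneg h hW
  rwa [sub_mul, trace_sub, sub_nonneg] at this

theorem PosSemidef.transpose_mul_mul_same {X : Matrix m m ℝ} (hX : X.PosSemidef)
    (A : Matrix m m ℝ) : (Aᵀ * X * A).PosSemidef := by
  simpa [conjTranspose_eq_transpose_of_trivial] using hX.conjTranspose_mul_mul_same A

theorem PosSemidef.mul_mul_transpose_same {X : Matrix m m ℝ} (hX : X.PosSemidef)
    (A : Matrix m m ℝ) : (A * X * Aᵀ).PosSemidef := by
  simpa [conjTranspose_eq_transpose_of_trivial] using hX.mul_mul_conjTranspose_same A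

variable [DecidableEq m]

theorem PosDef.posSemidef_fromBlocks_one_iff₂₂ {K M : Matrix m m ℝ} (hM : M.PosDef) :
    (fromBlocks K 1 1 M).PosSemidef ↔ M⁻¹ ≤ K := by
  have := hM.isUnit.invertible
  simpa [le_iff] using PosDef.fromBlocks₂₂ K (1 : Matrix m m ℝ) hM

theorem PosDef.posSemidef_fromBlocks_one_iff₁₁ {K M : Matrix m m ℝ} (hK : K.PosDef) :
    (fromBlocks K 1 1 M).PosSemidef ↔ K⁻¹ ≤ M := by
  have := hK.isUnit.invertible
  simpa [le_iff] using PosDef.fromBlocks₁₁ (1 : Matrix m m ℝ) M hK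

theorem PosDef.inv_le_inv {M₁ M₂ : Matrix m m ℝ} (h₁ : M₁.PosDef) (h : M₁ ≤ M₂) :
    M₂⁻¹ ≤ M₁⁻¹ := by
  have h₂ : M₂.PosDef := by simpa using h₁.add_posSemidef h
  rw [← h₂.posSemidef_fromBlocks_one_iff₁₁, h₁.inv.posSemidef_fromBlocks_one_iff₂₂,
    nonsing_inv_nonsing_inv _ h₁.det_pos.ne'.isUnit]
  exact h

theorem PosSemidef.posDef_of_fromBlocks_one {K M : Matrix m m ℝ}
    (h : (fromBlocks K 1 1 M).PosSemidef) : M.PosDef := by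
  have hM : M.PosSemidef := h.submatrix Sum.inr
  refine hM.posDef_iff_det_ne_zero.mpr fun hdet => ?_
  obtain ⟨v, hv0, hv⟩ := exists_mulVec_eq_zero_iff.mpr hdet
  have hker := (h.dotProduct_mulVec_zero_iff (Sum.elim 0 v)).mp (by simp [fromBlocks_mulVec, hv])
  exact hv0 (funext fun i => by simpa [fromBlocks_mulVec] using congrFun hker (Sum.inl i))

end Matrix

section Riccati
variable {m : Type*} [Fintype m] [DecidableEq m]

/-- The paper's backward Riccati step `P_{t|t+1} ↦ P_t`. -/
noncomputable def riccatiUpdate (A Q M : Matrix m m ℝ) : Matrix m m ℝ :=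
  (Aᵀ * M⁻¹ * A + Q)⁻¹

variable {A Q M M₁ M₂ P : Matrix m m ℝ}

theorem riccatiUpdate_posDef (hQ : Q.PosDef) (hM : M.PosDef) : (riccatiUpdate A Q M).PosDef :=
  (PosDef.posSemidef_add (hM.inv.posSemidef.transpose_mul_mul_same A) hQ).inv

theorem riccatiUpdate_mono (hQ : Q.PosDef) (hM₁ : M₁.PosDef) (h : M₁ ≤ M₂) :
    riccatiUpdate A Q M₁ ≤ riccatiUpdate A Q M₂ := by
  have hM₂ : M₂.PosDef := by simpa using hM₁.add_posSemidef h
  refine PosDef.inv_le_inv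
    (PosDef.posSemidef_add (hM₂.inv.posSemidef.transpose_mul_mul_same A) hQ) ?_
  rw [le_iff, add_sub_add_right_eq_sub, ← sub_mul, ← mul_sub]
  exact (hM₁.inv_le_inv h).transpose_mul_mul_same A

theorem riccatiUpdate_eq (hQ : Q.PosDef) (hM : M.PosDef) :
    riccatiUpdate A Q M = Q⁻¹ - Q⁻¹ * Aᵀ * (M + A * Q⁻¹ * Aᵀ)⁻¹ * (A * Q⁻¹) := by
  have hMM : M⁻¹⁻¹ = M := nonsing_inv_nonsing_inv _ hM.det_pos.ne'.isUnit
  have hAC : IsUnit (M⁻¹⁻¹ + A * Q⁻¹ * Aᵀ) := by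
    rw [hMM]; exact (hM.add_posSemidef (hQ.inv.posSemidef.mul_mul_transpose_same A)).isUnit
  rw [riccatiUpdate, add_comm,
    add_mul_mul_inv_eq_sub Q Aᵀ M⁻¹ A hQ.isUnit hM.inv.isUnit hAC, hMM]
  noncomm_ring

theorem posSemidef_fromBlocks_iff_le_riccatiUpdate (hQ : Q.PosDef) (hM : M.PosDef) :
    (fromBlocks (Q⁻¹ - P) (Q⁻¹ * Aᵀ) (A * Q⁻¹) (M + A * Q⁻¹ * Aᵀ)).PosSemidef
      ↔ P ≤ riccatiUpdate A Q M := by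
  have hD : (M + A * Q⁻¹ * Aᵀ).PosDef :=
    hM.add_posSemidef (hQ.inv.posSemidef.mul_mul_transpose_same A)
  have := hD.isUnit.invertible
  have hC : A * Q⁻¹ = (Q⁻¹ * Aᵀ)ᴴ := by
    rw [conjTranspose_mul, hQ.inv.isHermitian.eq, conjTranspose_eq_transpose_of_trivial Aᵀ,
      transpose_transpose]
  nth_rewrite 1 [hC]
  rw [PosDef.fromBlocks₂₂ _ _ hD, le_iff, riccatiUpdate_eq hQ hM, ← hC]
  congr! 1
  noncomm_ring

end Riccati

theorem exists_backward_recursion {α : Type*} (f : ℕ → α → α) (T : ℕ) (x : α) :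
    ∃ P : ℕ → α, P T = x ∧ ∀ t < T, P t = f t (P (t + 1)) := by
  induction T generalizing f with
  | zero => exact ⟨fun _ => x, rfl, fun t ht => absurd ht t.not_lt_zero⟩
  | succ T ih =>
    obtain ⟨P, hPT, hP⟩ := ih (fun t => f (t + 1))
    refine ⟨fun t => Nat.casesOn t (f 0 (P 0)) P, hPT, ?_⟩
    rintro (_ | t) ht
    · rfl
    · exact hP t (by omega)

section Trajectory
variable {m : Type*} [Fintype m] [DecidableEq m] {T : ℕ} {A Q Vs P R : ℕ → Matrix m m ℝ}

theorem posDef_of_riccati_recursion (hQ : ∀ t ≤ T, (Q t).PosDef)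
    (hVs : ∀ t < T, (Vs t).PosSemidef) (hPT : P T = (Q T)⁻¹)
    (hP : ∀ t < T, P t = riccatiUpdate (A t) (Q t) (P (t + 1) + Vs t)) :
    ∀ t ≤ T, (P t).PosDef := by
  intro t ht
  induction ht using Nat.decreasingInduction with
  | self => exact hPT ▸ (hQ T le_rfl).inv
  | of_succ t ht ih =>
    exact hP t ht ▸ riccatiUpdate_posDef (hQ t ht.le) (ih.add_posSemidef (hVs t ht))

theorem le_of_riccati_subsolution (hQ : ∀ t < T, (Q t).PosDef) (hRT : R T ≤ P T)
    (hRpos : ∀ t < T, (R (t + 1) + Vs t).PosDef)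
    (hR : ∀ t < T, R t ≤ riccatiUpdate (A t) (Q t) (R (t + 1) + Vs t))
    (hP : ∀ t < T, P t = riccatiUpdate (A t) (Q t) (P (t + 1) + Vs t)) :
    ∀ t ≤ T, R t ≤ P t := by
  intro t ht
  induction ht using Nat.decreasingInduction with
  | self => exact hRT
  | of_succ t ht ih =>
    calc R t ≤ riccatiUpdate (A t) (Q t) (R (t + 1) + Vs t) := hR t ht
      _ ≤ riccatiUpdate (A t) (Q t) (P (t + 1) + Vs t) :=
        riccatiUpdate_mono (hQ t ht) (hRpos t ht) (add_le_add_left ih _)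
      _ = P t := (hP t ht).symm

end Trajectory

section Scheduling
variable {m ι : Type*} [Fintype m] [DecidableEq m]

def originalCosts (T : ℕ) (A Q W : ℕ → Matrix m m ℝ) (V : ℕ → ι → Matrix m m ℝ) :
    Set ℝ :=
  {J : ℝ | ∃ (σ : ℕ → ι) (P Pmid Kmid : ℕ → Matrix m m ℝ),
    P T = (Q T)⁻¹ ∧
    (∀ t < T, Pmid t = P (t + 1) + V t (σ t)) ∧
    (∀ t < T, Kmid t = (Pmid t)⁻¹) ∧
    (∀ t < T, P t = ((A t)ᵀ * Kmid t * A t + Q t)⁻¹) ∧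
    J = ∑ t ∈ range T, (Kmid t * W t).trace}

def relaxedCosts (T : ℕ) (A Q W : ℕ → Matrix m m ℝ) (V : ℕ → ι → Matrix m m ℝ) :
    Set ℝ :=
  {J : ℝ | ∃ (Vsel P Pmid Kmid : ℕ → Matrix m m ℝ),
    P T = (Q T)⁻¹ ∧
    (∀ t < T, ∃ i : ι, Vsel t = V t i) ∧
    (∀ t < T, Pmid t = P (t + 1) + Vsel t) ∧
    (∀ t < T, (fromBlocks (Kmid t) 1 1 (Pmid t)).PosSemidef) ∧
    (∀ t < T, (fromBlocks ((Q t)⁻¹ - P t) ((Q t)⁻¹ * (A t)ᵀ)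
        (A t * (Q t)⁻¹) (Pmid t + A t * (Q t)⁻¹ * (A t)ᵀ)).PosSemidef) ∧
    J = ∑ t ∈ range T, (Kmid t * W t).trace}

variable {T : ℕ} {A Q W : ℕ → Matrix m m ℝ} {V : ℕ → ι → Matrix m m ℝ}

theorem originalCosts_subset_relaxedCosts (hQ : ∀ t ≤ T, (Q t).PosDef)
    (hV : ∀ t < T, ∀ i, (V t i).PosSemidef) :
    originalCosts T A Q W V ⊆ relaxedCosts T A Q W V := by
  rintro J ⟨σ, P, Pmid, Kmid, hPT, hPmid, hKmid, hP, rfl⟩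
  have hP_riccati : ∀ t < T, P t = riccatiUpdate (A t) (Q t) (P (t + 1) + V t (σ t)) :=
    fun t ht => by rw [hP t ht, hKmid t ht, hPmid t ht, riccatiUpdate]
  have hP_pos := posDef_of_riccati_recursion hQ (fun t ht => hV t ht (σ t)) hPT hP_riccati
  have hPmid_pos : ∀ t < T, (Pmid t).PosDef := fun t ht =>
    hPmid t ht ▸ (hP_pos (t + 1) ht).add_posSemidef (hV t ht _)
  refine ⟨fun t => V t (σ t), P, Pmid, Kmid, hPT, fun t _ => ⟨σ t, rfl⟩, hPmid,
    fun t ht => ?_, fun t ht => ?_, rfl⟩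
  · exact (hPmid_pos t ht).posSemidef_fromBlocks_one_iff₂₂.mpr (hKmid t ht).ge
  · refine (posSemidef_fromBlocks_iff_le_riccatiUpdate (hQ t ht.le) (hPmid_pos t ht)).mpr ?_
    rw [hP t ht, hKmid t ht, riccatiUpdate]

theorem exists_originalCost_le [Nonempty ι] (hQ : ∀ t < T, (Q t).PosDef)
    (hW : ∀ t < T, (W t).PosSemidef) :
    ∀ J ∈ relaxedCosts T A Q W V, ∃ J' ∈ originalCosts T A Q W V, J' ≤ J := by
  rintro J ⟨Vsel, P, Pmid, Kmid, hPT, hVsel, hPmid, hLMI₁, hLMI₂, rfl⟩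
  choose σ' hσ' using hVsel
  let σ : ℕ → ι := fun t => if h : t < T then σ' t h else Classical.arbitrary ι
  have hσ : ∀ t < T, Vsel t = V t (σ t) := fun t ht => by simp [σ, ht, hσ']
  obtain ⟨P', hP'T, hP'⟩ := exists_backward_recursion
    (fun t X => riccatiUpdate (A t) (Q t) (X + V t (σ t))) T (Q T)⁻¹
  have hPmid_pos : ∀ t < T, (Pmid t).PosDef := fun t ht =>
    (hLMI₁ t ht).posDef_of_fromBlocks_one
  have hP_le : ∀ t ≤ T, P t ≤ P' t := by
    refine le_of_riccati_subsolution hQ (hPT.trans hP'T.symm).le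
      (fun t ht => ?_) (fun t ht => ?_) hP'
    · rw [← hσ t ht, ← hPmid t ht]; exact hPmid_pos t ht
    · rw [← hσ t ht, ← hPmid t ht]
      exact (posSemidef_fromBlocks_iff_le_riccatiUpdate (hQ t ht) (hPmid_pos t ht)).mp
        (hLMI₂ t ht)
  refine ⟨_, ⟨σ, P', fun t => P' (t + 1) + V t (σ t), fun t => (P' (t + 1) + V t (σ t))⁻¹,
    hP'T, fun _ _ => rfl, fun _ _ => rfl, hP', rfl⟩, sum_le_sum fun t ht => ?_⟩
  rw [mem_range] at ht
  refine trace_mul_le_trace_mul ?_ (hW t ht)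
  calc (P' (t + 1) + V t (σ t))⁻¹ ≤ (Pmid t)⁻¹ := by
        refine (hPmid_pos t ht).inv_le_inv ?_
        rw [hPmid t ht, hσ t ht]
        exact add_le_add_left (hP_le (t + 1) ht) _
    _ ≤ Kmid t := (hPmid_pos t ht).posSemidef_fromBlocks_one_iff₂₂.mp (hLMI₁ t ht)

end Scheduling

theorem relaxed_problem_equiv_original_general {n N : ℕ} (T : ℕ) (hN : 1 ≤ N)
    (A Q W : ℕ → Matrix (Fin n) (Fin n) ℝ)
    (V : ℕ → Fin N → Matrix (Fin n) (Fin n) ℝ)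
    (hQ : ∀ t ≤ T, (Q t).PosDef)
    (hW : ∀ t < T, (W t).PosSemidef)
    (hV : ∀ t < T, ∀ i, (V t i).PosSemidef) :
    -- Problem A: minimize over schedules `σ` with the exact Riccati recursion
    sInf {J : ℝ | ∃ (σ : ℕ → Fin N) (P Pmid Kmid : ℕ → Matrix (Fin n) (Fin n) ℝ),
        P T = (Q T)⁻¹ ∧
        (∀ t < T, Pmid t = P (t + 1) + V t (σ t)) ∧
        (∀ t < T, Kmid t = (Pmid t)⁻¹) ∧
        (∀ t < T, P t = ((A t)ᵀ * Kmid t * A t + Q t)⁻¹) ∧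
        J = ∑ t ∈ range T, (Kmid t * W t).trace} =
    -- Problem B: minimize over tuples satisfying the LMI relaxation
    sInf {J : ℝ | ∃ (Vsel P Pmid Kmid : ℕ → Matrix (Fin n) (Fin n) ℝ),
        P T = (Q T)⁻¹ ∧
        (∀ t < T, ∃ i : Fin N, Vsel t = V t i) ∧
        (∀ t < T, Pmid t = P (t + 1) + Vsel t) ∧
        (∀ t < T, (fromBlocks (Kmid t) 1 1 (Pmid t)).PosSemidef) ∧
        (∀ t < T, (fromBlocks ((Q t)⁻¹ - P t) ((Q t)⁻¹ * (A t)ᵀ)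
            (A t * (Q t)⁻¹) (Pmid t + A t * (Q t)⁻¹ * (A t)ᵀ)).PosSemidef) ∧
        J = ∑ t ∈ range T, (Kmid t * W t).trace} := by
  have : Nonempty (Fin N) := ⟨⟨0, hN⟩⟩
  exact csInf_eq_csInf_of_forall_exists_le
    (fun J hJ => ⟨J, originalCosts_subset_relaxedCosts (A := A) (W := W) hQ hV hJ, le_rfl⟩)
    (exists_originalCost_le (fun t ht => hQ t ht.le) hW)

/-- Theorem 1: the optimal value of the original actuator-scheduling
problem (Problem A) equals the optimal value of its LMI relaxation (Problem B).
Here `W t` denotes the weight matrix `W̄_{t−1}`, and `V t i` the actuator matrices. -/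
theorem relaxed_problem_equiv_original {n N : ℕ} (T : ℕ) (hT : 1 ≤ T) (hN : 1 ≤ N)
    (A Q W : ℕ → Matrix (Fin n) (Fin n) ℝ)
    (V : ℕ → Fin N → Matrix (Fin n) (Fin n) ℝ)
    (hQ : ∀ t ≤ T, (Q t).PosDef)
    (hW : ∀ t < T, (W t).PosSemidef)
    (hV : ∀ t < T, ∀ i, (V t i).PosSemidef) :
    -- Problem A: minimize over schedules `σ` with the exact Riccati recursion
    sInf {J : ℝ | ∃ (σ : ℕ → Fin N) (P Pmid Kmid : ℕ → Matrix (Fin n) (Fin n) ℝ),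
        P T = (Q T)⁻¹ ∧
        (∀ t < T, Pmid t = P (t + 1) + V t (σ t)) ∧
        (∀ t < T, Kmid t = (Pmid t)⁻¹) ∧
        (∀ t < T, P t = ((A t)ᵀ * Kmid t * A t + Q t)⁻¹) ∧
        J = ∑ t ∈ range T, (Kmid t * W t).trace} =
    -- Problem B: minimize over tuples satisfying the LMI relaxation
    sInf {J : ℝ | ∃ (Vsel P Pmid Kmid : ℕ → Matrix (Fin n) (Fin n) ℝ),
        P T = (Q T)⁻¹ ∧
        (∀ t < T, ∃ i : Fin N, Vsel t = V t i) ∧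
        (∀ t < T, Pmid t = P (t + 1) + Vsel t) ∧
        (∀ t < T, (fromBlocks (Kmid t) 1 1 (Pmid t)).PosSemidef) ∧
        (∀ t < T, (fromBlocks ((Q t)⁻¹ - P t) ((Q t)⁻¹ * (A t)ᵀ)
            (A t * (Q t)⁻¹) (Pmid t + A t * (Q t)⁻¹ * (A t)ᵀ)).PosSemidef) ∧
        J = ∑ t ∈ range T, (Kmid t * W t).trace} :=
  relaxed_problem_equiv_original_general T hN A Q W V hQ hW hV
end

section
/- (Key construction in the proof of Theorem 1.) Let T ≥ 1, and for t = 0,…,T−1 let A_t ∈ ℝ^{n×n}, Q_t ∈ ℝ^{n×n} symmetric positive definite, and Q_T ∈ ℝ^{n×n} symmetric positive definite. Suppose {K_{t|t+1}, P_{t|t+1}, P_t}_{t=0}^{T−1} are symmetric positive definite matrices satisfying P_T = Q_T⁻¹, K_{t|t+1} ⪰ P_{t|t+1}⁻¹, and P_t ⪯ (A_tᵀ K_{t|t+1} A_t + Q_t)⁻¹ for all t. Define recursively P̄_T := P_T, P̄_{t|t+1} := P̄_{t+1} + (P_{t|t+1} − P_{t+1}), K̄_{t|t+1} := P̄_{t|t+1}⁻¹,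 and P̄_t := (A_tᵀ K̄_{t|t+1} A_t + Q_t)⁻¹, for t = T−1 down to 0. Then for every t = 0,…,T−1: P̄_{t|t+1} ⪰ P_{t|t+1}, K̄_{t|t+1} ⪯ K_{t|t+1}, and P̄_t ⪰ P_t. Consequently, for any symmetric positive semidefinite weight matrices W̄_{−1},…,W̄_{T−2}, one has ∑_{t=0}^{T−1} tr(K̄_{t|t+1} W̄_{t−1}) ≤ ∑_{t=0}^{T−1} tr(K_{t|t+1} W̄_{t−1}). -/
/-!
Matrix inversion is antitone on positive definite matrices in the Loewner order, hence so is
`K ↦ (Aᵀ K A + Q)⁻¹`. Starting from `P̄_T = P_T`, the barred recursion shifts `P_{t|t+1}` up by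
`P̄_{t+1} - P_{t+1} ⪰ 0`; inverting gives `K̄_{t|t+1} ⪯ P_{t|t+1}⁻¹ ⪯ K_{t|t+1}`, and applying the
antitone map gives `P̄_t ⪰ (A_tᵀ K_{t|t+1} A_t + Q_t)⁻¹ ⪰ P_t`, which closes a backward induction.
The cost comparison holds because `X ↦ tr (X W)` is monotone for `W ⪰ 0`.
-/

open Matrix Finset

open scoped MatrixOrder ComplexOrder

namespace Matrix

variable {𝕜 ι : Type*} [RCLike 𝕜]

lemma PosDef.of_le {A B : Matrix ι ι 𝕜} (hA : A.PosDef) (hAB : A ≤ B) : B.PosDef := by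
  simpa using hA.add_posSemidef hAB

variable [Fintype ι] [DecidableEq ι]

lemma inv_sub_inv_eq_of_isUnit_det {A B : Matrix ι ι 𝕜} (hA : IsUnit A.det) (hB : IsUnit B.det) :
    A⁻¹ - B⁻¹ = B⁻¹ * (B - A) * B⁻¹ + (B⁻¹ * (B - A)) * A⁻¹ * ((B - A) * B⁻¹) := by
  have hleft : B⁻¹ * (B - A) * A⁻¹ = A⁻¹ - B⁻¹ := by
    rw [Matrix.mul_sub, Matrix.sub_mul, nonsing_inv_mul _ hB, Matrix.mul_assoc,
      mul_nonsing_inv _ hA, Matrix.one_mul, Matrix.mul_one]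
  have hright : A⁻¹ * (B - A) * B⁻¹ = A⁻¹ - B⁻¹ := by
    rw [Matrix.mul_sub, Matrix.sub_mul, nonsing_inv_mul _ hA, Matrix.mul_assoc,
      mul_nonsing_inv _ hB, Matrix.one_mul, Matrix.mul_one]
  calc A⁻¹ - B⁻¹ = B⁻¹ * (B - A) * (B⁻¹ + (A⁻¹ - B⁻¹)) := by rw [add_sub_cancel, hleft]
    _ = _ := by rw [← hright]; simp only [Matrix.mul_add, Matrix.mul_assoc]

lemma PosDef.inv_le_inv_of_le {A B : Matrix ι ι 𝕜} (hA : A.PosDef) (hAB : A ≤ B) :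
    B⁻¹ ≤ A⁻¹ := by
  have hB := hA.of_le hAB
  have hBA : (B - A).PosSemidef := le_iff.mp hAB
  have hfirst : (B⁻¹ * (B - A) * B⁻¹).PosSemidef := by
    simpa [hB.isHermitian.inv.eq] using hBA.mul_mul_conjTranspose_same B⁻¹
  have hsecond : ((B⁻¹ * (B - A)) * A⁻¹ * ((B - A) * B⁻¹)).PosSemidef := by
    simpa [hB.isHermitian.inv.eq, hBA.isHermitian.eq] using
      hA.inv.posSemidef.mul_mul_conjTranspose_same (B⁻¹ * (B - A))
  rw [le_iff, inv_sub_inv_eq_of_isUnit_det ((isUnit_iff_isUnit_det A).mp hA.isUnit)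
    ((isUnit_iff_isUnit_det B).mp hB.isUnit)]
  exact hfirst.add hsecond

lemma trace_mul_nonneg {A B : Matrix ι ι 𝕜} (hA : A.PosSemidef) (hB : B.PosSemidef) :
    0 ≤ (A * B).trace := by
  obtain ⟨X, rfl⟩ := CStarAlgebra.nonneg_iff_eq_star_mul_self.mp hB.nonneg
  rw [← Matrix.mul_assoc, trace_mul_comm, ← Matrix.mul_assoc]
  exact (hA.mul_mul_conjTranspose_same X).trace_nonneg

lemma trace_mul_le_trace_mul_s9 {A B W : Matrix ι ι 𝕜} (hAB : A ≤ B) (hW : W.PosSemidef) :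
    (A * W).trace ≤ (B * W).trace := by
  have := trace_mul_nonneg (le_iff.mp hAB) hW
  rwa [Matrix.sub_mul, trace_sub, sub_nonneg] at this

lemma inv_transpose_mul_mul_add_le_of_le {A Q K₁ K₂ : Matrix ι ι ℝ} (hQ : Q.PosDef)
    (hK₁ : K₁.PosSemidef) (hK : K₁ ≤ K₂) :
    (Aᵀ * K₂ * A + Q)⁻¹ ≤ (Aᵀ * K₁ * A + Q)⁻¹ := by
  have hconj : Aᵀ * K₁ * A ≤ Aᵀ * K₂ * A := by
    have := star_left_conjugate_le_conjugate hK A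
    rwa [star_eq_conjTranspose, conjTranspose_eq_transpose_of_trivial] at this
  have hpos : (Aᵀ * K₁ * A + Q).PosDef := by
    rw [← conjTranspose_eq_transpose_of_trivial]
    exact PosDef.posSemidef_add (hK₁.conjTranspose_mul_mul_same A) hQ
  exact hpos.inv_le_inv_of_le (add_le_add_left hconj Q)

end Matrix

section BackwardStep

variable {ι : Type*} [Fintype ι] [DecidableEq ι]

lemma le_barred_of_le_next {A Q Kmid Pmid P Kbar Pmidbar Pbar Pnext Pnextbar : Matrix ι ι ℝ}
    (hQ : Q.PosDef) (hPmid : Pmid.PosDef) (hKge : Pmid⁻¹ ≤ Kmid)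
    (hPle : P ≤ (Aᵀ * Kmid * A + Q)⁻¹)
    (hPmidbar : Pmidbar = Pnextbar + (Pmid - Pnext)) (hKbar : Kbar = Pmidbar⁻¹)
    (hPbar : Pbar = (Aᵀ * Kbar * A + Q)⁻¹) (hnext : Pnext ≤ Pnextbar) :
    Pmid ≤ Pmidbar ∧ Kbar ≤ Kmid ∧ P ≤ Pbar := by
  have hPmid_le : Pmid ≤ Pmidbar := by
    have hshift : Pmidbar - Pmid = Pnextbar - Pnext := by rw [hPmidbar]; abel
    rw [le_iff, hshift]
    exact hnext
  have hKbar_le : Kbar ≤ Kmid := hKbar ▸ (hPmid.inv_le_inv_of_le hPmid_le).trans hKge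
  have hKbar_pos : Kbar.PosSemidef := hKbar ▸ (hPmid.of_le hPmid_le).inv.posSemidef
  refine ⟨hPmid_le, hKbar_le, hPle.trans ?_⟩
  exact hPbar ▸ inv_transpose_mul_mul_add_le_of_le hQ hKbar_pos hKbar_le

end BackwardStep

theorem theorem1_construction_general {n : ℕ} (T : ℕ)
    (A Q : ℕ → Matrix (Fin n) (Fin n) ℝ)
    (hQ : ∀ t ≤ T, (Q t).PosDef)
    (Kmid Pmid P : ℕ → Matrix (Fin n) (Fin n) ℝ)
    (hPmidPD : ∀ t < T, (Pmid t).PosDef)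
    (hKge : ∀ t < T, (Kmid t - (Pmid t)⁻¹).PosSemidef)
    (hPle : ∀ t < T, (((A t)ᵀ * Kmid t * A t + Q t)⁻¹ - P t).PosSemidef)
    -- the recursively constructed (barred) tuple
    (Kbar Pmidbar Pbar : ℕ → Matrix (Fin n) (Fin n) ℝ)
    (hPbarT : Pbar T = P T)
    (hPmidbar : ∀ t < T, Pmidbar t = Pbar (t + 1) + (Pmid t - P (t + 1)))
    (hKbar : ∀ t < T, Kbar t = (Pmidbar t)⁻¹)
    (hPbar : ∀ t < T, Pbar t = ((A t)ᵀ * Kbar t * A t + Q t)⁻¹) :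
    (∀ t < T,
        (Pmidbar t - Pmid t).PosSemidef ∧
        (Kmid t - Kbar t).PosSemidef ∧
        (Pbar t - P t).PosSemidef) ∧
      ∀ W : ℕ → Matrix (Fin n) (Fin n) ℝ, (∀ t < T, (W t).PosSemidef) →
        ∑ t ∈ range T, (Kbar t * W t).trace ≤
          ∑ t ∈ range T, (Kmid t * W t).trace := by
  have hstep : ∀ t < T, P (t + 1) ≤ Pbar (t + 1) →
      Pmid t ≤ Pmidbar t ∧ Kbar t ≤ Kmid t ∧ P t ≤ Pbar t := fun t ht =>
    le_barred_of_le_next (hQ t ht.le) (hPmidPD t ht) (hKge t ht) (hPle t ht) (hPmidbar t ht)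
      (hKbar t ht) (hPbar t ht)
  have hP : ∀ t ≤ T, P t ≤ Pbar t := fun t ht =>
    Nat.decreasingInduction (motive := fun t _ => P t ≤ Pbar t)
      (fun t ht hnext => (hstep t ht hnext).2.2) (hPbarT ▸ le_rfl) ht
  refine ⟨fun t ht => hstep t ht (hP (t + 1) ht), fun W hW => sum_le_sum fun t ht => ?_⟩
  have ht := mem_range.mp ht
  exact trace_mul_le_trace_mul_s9 (hstep t ht (hP (t + 1) ht)).2.1 (hW t ht)

/-- key construction in the proof of Theorem 1.  Given a feasible tuple
`{Kmid t, Pmid t, P t}` of symmetric positive definite matrices of the relaxed problem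
(`P T = (Q T)⁻¹`, `Kmid t ⪰ (Pmid t)⁻¹`, `P t ⪯ (A_tᵀ Kmid t A_t + Q_t)⁻¹`), the
recursively constructed tuple `{K̄mid, P̄mid, P̄}` satisfies `P̄mid t ⪰ Pmid t`,
`K̄mid t ⪯ Kmid t`, `P̄ t ⪰ P t` for all `t < T`, and consequently the relaxed cost does
not increase:  `∑_t tr(K̄mid t W̄_{t−1}) ≤ ∑_t tr(Kmid t W̄_{t−1})`.
Here `W t` denotes `W̄_{t−1}`. -/
theorem theorem1_construction {n : ℕ} (T : ℕ) (hT : 1 ≤ T)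
    (A Q : ℕ → Matrix (Fin n) (Fin n) ℝ)
    (hQ : ∀ t ≤ T, (Q t).PosDef)
    (Kmid Pmid P : ℕ → Matrix (Fin n) (Fin n) ℝ)
    (hKmidPD : ∀ t < T, (Kmid t).PosDef)
    (hPmidPD : ∀ t < T, (Pmid t).PosDef)
    (hPPD : ∀ t < T, (P t).PosDef)
    (hPT : P T = (Q T)⁻¹)
    (hKge : ∀ t < T, (Kmid t - (Pmid t)⁻¹).PosSemidef)
    (hPle : ∀ t < T, (((A t)ᵀ * Kmid t * A t + Q t)⁻¹ - P t).PosSemidef)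
    -- the recursively constructed (barred) tuple
    (Kbar Pmidbar Pbar : ℕ → Matrix (Fin n) (Fin n) ℝ)
    (hPbarT : Pbar T = P T)
    (hPmidbar : ∀ t < T, Pmidbar t = Pbar (t + 1) + (Pmid t - P (t + 1)))
    (hKbar : ∀ t < T, Kbar t = (Pmidbar t)⁻¹)
    (hPbar : ∀ t < T, Pbar t = ((A t)ᵀ * Kbar t * A t + Q t)⁻¹) :
    (∀ t < T,
        (Pmidbar t - Pmid t).PosSemidef ∧
        (Kmid t - Kbar t).PosSemidef ∧
        (Pbar t - P t).PosSemidef) ∧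
      ∀ W : ℕ → Matrix (Fin n) (Fin n) ℝ, (∀ t < T, (W t).PosSemidef) →
        ∑ t ∈ range T, (Kbar t * W t).trace ≤
          ∑ t ∈ range T, (Kmid t * W t).trace :=
  theorem1_construction_general T A Q hQ Kmid Pmid P hPmidPD hKge hPle Kbar Pmidbar Pbar hPbarT
    hPmidbar hKbar hPbar
end

section
/- (Bellman recursion for the scheduling value function.) For t ≥ 1 and any n×n symmetric positive definite matrix K, the value function satisfies U_t(K) = min over i ∈ {1,…,N} of [ tr( g(B_t(i),R_t(i),K) · W̄_{t−1} ) + U_{t−1}( h(A_t,Q_t, g(B_t(i),R_t(i),K)) ) ], and U_0(K) = min over i ∈ {1,…,N} of tr( g(B_0(i),R_0(i),K) · W̄_{−1} ). -/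
open Matrix Finset

/-- `h(A,Q,M) = Aᵀ M A + Q`. -/
def hfun {n : ℕ} (A Q M : Matrix (Fin n) (Fin n) ℝ) : Matrix (Fin n) (Fin n) ℝ :=
  Aᵀ * M * A + Q

/-- The cost `∑_{k=0}^{t} tr(K_{k|k+1} W̄_{k−1})` of a schedule `σ` over horizon `{0,…,t}`
with terminal condition `K_{t+1} = K`, where `K_{k|k+1} = g(B_k(σ k), R_k(σ k), K_{k+1})`
and `K_k = h(A_k, Q_k, K_{k|k+1})`.  Here `W k` denotes `W̄_{k−1}`. -/
noncomputable def schedCost {n N : ℕ} {m : Fin N → ℕ}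
    (A Q W : ℕ → Matrix (Fin n) (Fin n) ℝ)
    (B : (k : ℕ) → (i : Fin N) → Matrix (Fin n) (Fin (m i)) ℝ)
    (R : (k : ℕ) → (i : Fin N) → Matrix (Fin (m i)) (Fin (m i)) ℝ)
    (σ : ℕ → Fin N) : ℕ → Matrix (Fin n) (Fin n) ℝ → ℝ
  | 0, K => ((g (B 0 (σ 0)) (R 0 (σ 0)) K) * W 0).trace
  | (t + 1), K =>
      ((g (B (t + 1) (σ (t + 1))) (R (t + 1) (σ (t + 1))) K) * W (t + 1)).trace +
        schedCost A Q W B R σ t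
          (hfun (A (t + 1)) (Q (t + 1)) (g (B (t + 1) (σ (t + 1))) (R (t + 1) (σ (t + 1))) K))

/-- The scheduling value function `U_t(K)`: the minimum of the cost over all schedules
`σ : {0,…,t} → {1,…,N}`. -/
noncomputable def valueU {n N : ℕ} {m : Fin N → ℕ}
    (A Q W : ℕ → Matrix (Fin n) (Fin n) ℝ)
    (B : (k : ℕ) → (i : Fin N) → Matrix (Fin n) (Fin (m i)) ℝ)
    (R : (k : ℕ) → (i : Fin N) → Matrix (Fin (m i)) (Fin (m i)) ℝ)
    (t : ℕ) (K : Matrix (Fin n) (Fin n) ℝ) : ℝ :=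
  ⨅ σ : ℕ → Fin N, schedCost A Q W B R σ t K

/-! A schedule's cost over `{0,…,t+1}` splits as the cost of its last choice `σ (t+1)` plus the
cost over `{0,…,t}`, and the latter does not see `σ (t+1)`. Pairing the last choice with an
arbitrary schedule therefore parametrises all schedules, and the infimum over the pairs is
taken one coordinate at a time. All infima are over finitely many values, since a cost over
`{0,…,t}` depends only on `σ` restricted to `{0,…,t}`. -/

section

variable {n N : ℕ} {m : Fin N → ℕ} (A Q W : ℕ → Matrix (Fin n) (Fin n) ℝ)
  (B : (k : ℕ) → (i : Fin N) → Matrix (Fin n) (Fin (m i)) ℝ)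
  (R : (k : ℕ) → (i : Fin N) → Matrix (Fin (m i)) (Fin (m i)) ℝ)

theorem schedCost_congr {t : ℕ} {σ τ : ℕ → Fin N} (h : ∀ k ≤ t, σ k = τ k)
    (K : Matrix (Fin n) (Fin n) ℝ) :
    schedCost A Q W B R σ t K = schedCost A Q W B R τ t K := by
  induction t generalizing K with
  | zero => rw [schedCost, schedCost, h 0 le_rfl]
  | succ t ih =>
    rw [schedCost, schedCost, h (t + 1) le_rfl, ih fun k hk => h k (hk.trans t.le_succ)]

theorem finite_range_schedCost (t : ℕ) (K : Matrix (Fin n) (Fin n) ℝ) :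
    (Set.range fun σ : ℕ → Fin N => schedCost A Q W B R σ t K).Finite := by
  refine (Set.finite_range fun τ : Fin (t + 1) → Fin N =>
    schedCost A Q W B R (fun k => τ ⟨min k t, by omega⟩) t K).subset ?_
  rintro _ ⟨σ, rfl⟩
  exact ⟨fun k => σ k, schedCost_congr A Q W B R (fun k hk => by simp [hk]) K⟩

theorem schedCost_update_succ (t : ℕ) (σ : ℕ → Fin N) (i : Fin N)
    (K : Matrix (Fin n) (Fin n) ℝ) :
    schedCost A Q W B R (Function.update σ (t + 1) i) (t + 1) K =
      ((g (B (t + 1) i) (R (t + 1) i) K) * W (t + 1)).trace +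
        schedCost A Q W B R σ t
          (hfun (A (t + 1)) (Q (t + 1)) (g (B (t + 1) i) (R (t + 1) i) K)) := by
  rw [schedCost, Function.update_self,
    schedCost_congr A Q W B R (τ := σ) (fun k hk => Function.update_of_ne (by omega) _ _)]

theorem valueU_zero (K : Matrix (Fin n) (Fin n) ℝ) :
    valueU A Q W B R 0 K = ⨅ i : Fin N, ((g (B 0 i) (R 0 i) K) * W 0).trace :=
  Function.Surjective.iInf_congr (fun σ => σ 0) (fun i => ⟨fun _ => i, rfl⟩) fun _ => rfl

theorem valueU_succ [NeZero N] (t : ℕ) (K : Matrix (Fin n) (Fin n) ℝ) :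
    valueU A Q W B R (t + 1) K =
      ⨅ i : Fin N, (((g (B (t + 1) i) (R (t + 1) i) K) * W (t + 1)).trace +
        valueU A Q W B R t (hfun (A (t + 1)) (Q (t + 1)) (g (B (t + 1) i) (R (t + 1) i) K))) := by
  set cost := fun σ : ℕ → Fin N => schedCost A Q W B R σ (t + 1) K
  set split := fun p : Fin N × (ℕ → Fin N) => Function.update p.2 (t + 1) p.1
  have split_surjective : split.Surjective := fun σ =>
    ⟨(σ (t + 1), σ), Function.update_eq_self _ _⟩
  have bdd : BddBelow (Set.range (cost ∘ split)) := by
    rw [split_surjective.range_comp]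
    exact (finite_range_schedCost A Q W B R _ K).bddBelow
  calc valueU A Q W B R (t + 1) K = ⨅ p, cost (split p) := (split_surjective.iInf_comp cost).symm
    _ = ⨅ i, ⨅ σ, cost (split (i, σ)) := ciInf_prod bdd
    _ = _ := by
      refine iInf_congr fun i => ?_
      simp only [cost, split, schedCost_update_succ, valueU]
      exact ((OrderIso.addLeft _).map_ciInf
        (finite_range_schedCost A Q W B R t _).bddBelow).symm

end

theorem valueU_bellman_general {n N : ℕ} [NeZero N] {m : Fin N → ℕ}
    (A Q W : ℕ → Matrix (Fin n) (Fin n) ℝ)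
    (B : (k : ℕ) → (i : Fin N) → Matrix (Fin n) (Fin (m i)) ℝ)
    (R : (k : ℕ) → (i : Fin N) → Matrix (Fin (m i)) (Fin (m i)) ℝ) :
    (∀ K : Matrix (Fin n) (Fin n) ℝ, K.PosDef →
      valueU A Q W B R 0 K = ⨅ i : Fin N, ((g (B 0 i) (R 0 i) K) * W 0).trace) ∧
    ∀ t : ℕ, ∀ K : Matrix (Fin n) (Fin n) ℝ, K.PosDef →
      valueU A Q W B R (t + 1) K =
        ⨅ i : Fin N,
          (((g (B (t + 1) i) (R (t + 1) i) K) * W (t + 1)).trace +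
            valueU A Q W B R t
              (hfun (A (t + 1)) (Q (t + 1)) (g (B (t + 1) i) (R (t + 1) i) K))) :=
  ⟨fun K _ => valueU_zero A Q W B R K, fun t K _ => valueU_succ A Q W B R t K⟩

/-- Bellman recursion for the scheduling value function:
`U_t(K) = min_i [tr(g(B_t(i),R_t(i),K) W̄_{t−1}) + U_{t−1}(h(A_t,Q_t,g(B_t(i),R_t(i),K)))]`
for `t ≥ 1`, and `U_0(K) = min_i tr(g(B_0(i),R_0(i),K) W̄_{−1})`. -/
theorem valueU_bellman {n N : ℕ} [NeZero N] {m : Fin N → ℕ}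
    (A Q W : ℕ → Matrix (Fin n) (Fin n) ℝ)
    (B : (k : ℕ) → (i : Fin N) → Matrix (Fin n) (Fin (m i)) ℝ)
    (R : (k : ℕ) → (i : Fin N) → Matrix (Fin (m i)) (Fin (m i)) ℝ)
    (hQ : ∀ k, (Q k).PosDef) (hR : ∀ k i, (R k i).PosDef)
    (hW : ∀ k, (W k).PosSemidef) :
    (∀ K : Matrix (Fin n) (Fin n) ℝ, K.PosDef →
      valueU A Q W B R 0 K = ⨅ i : Fin N, ((g (B 0 i) (R 0 i) K) * W 0).trace) ∧
    ∀ t : ℕ, ∀ K : Matrix (Fin n) (Fin n) ℝ, K.PosDef →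
      valueU A Q W B R (t + 1) K =
        ⨅ i : Fin N,
          (((g (B (t + 1) i) (R (t + 1) i) K) * W (t + 1)).trace +
            valueU A Q W B R t
              (hfun (A (t + 1)) (Q (t + 1)) (g (B (t + 1) i) (R (t + 1) i) K))) :=
  valueU_bellman_general A Q W B R
end
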